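/- Given the homeomorphic embedding well-quasi-order on terms over a finite signature, every sequence t_1, ..., t_N of terms containing no pair i < j with t_i ⊴ t_j (a 'bad' sequence) built from a fixed finite set of initial subterms has bounded length; equivalently, there is no infinite bad sequence. -/

import Mathlib

/-- First-order terms over a signature `S`: finite rooted trees whose nodes are
labeled by symbols of `S`. -/
inductive Term (S : Type*) where
  | node (s : S) (ts : List (Term S))

/-- A term is arity-respecting (well-formed) if the number of children of each
node equals the arity of its label. -/
inductive WF {S : Type*} (ar : S → ℕ) : Term S → Prop
  | node {s : S} {ts : List (Term S)} :
      ts.length = ar s → (∀ t ∈ ts, WF ar t) → WF ar (Term.node s ts)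

/-- The homeomorphic embedding on terms: `e ⊴ s(f₁,…,fₙ)` whenever `e ⊴ fᵢ` for
some `i` (diving), and `s(e₁,…,eₙ) ⊴ s(f₁,…,fₙ)` whenever `eᵢ ⊴ fᵢ` for all `i`
(coupling, which in particular relates equal constants). -/
inductive Emb {S : Type*} : Term S → Term S → Prop
  | dive {e : Term S} {s : S} {fs : List (Term S)} {f : Term S} :
      f ∈ fs → Emb e f → Emb e (Term.node s fs)
  | couple {s : S} {es fs : List (Term S)} (h : es.length = fs.length) :
      (∀ i : Fin es.length, Emb (es.get i) (fs.get (Fin.cast h i))) →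
      Emb (Term.node s es) (Term.node s fs)

/-! Nash-Williams' minimal bad sequence argument. If there were a bad sequence of well-formed
terms, there would be one, `f`, of minimal term sizes position by position. The children of the
terms `f n` are then well-quasi-ordered by `⊴`: from a bad sequence of them starting at a child of
`f n₀` with `n₀` least, `f 0, …, f (n₀ - 1)` followed by that sequence is again bad (a term
embedding into a child embeds into its parent) but smaller at `n₀`. By Higman's lemma the children
lists are then well-quasi-ordered under sublist embedding, and since `S` is finite some `f m`,
`f n` with `m < n` have the same root and children lists related this way; equal arities make
the relation pointwise, so `f m ⊴ f n`. -/

namespace Term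

variable {S : Type*}

def root : Term S → S
  | node s _ => s

def children : Term S → List (Term S)
  | node _ ts => ts

theorem node_root_children (t : Term S) : node t.root t.children = t := by
  cases t; rfl

theorem sizeOf_lt_of_mem_children {t u : Term S} (h : u ∈ t.children) : sizeOf u < sizeOf t := by
  cases t with
  | node s ts =>
    have : sizeOf u < sizeOf ts := List.sizeOf_lt_of_mem h
    simp only [node.sizeOf_spec]
    omega

end Term

open Term

section Embedding

variable {S : Type*}

theorem Emb.node_of_forall₂ {s : S} {es fs : List (Term S)} (h : List.Forall₂ Emb es fs) :
    Emb (node s es) (node s fs) := by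
  obtain ⟨hlen, hget⟩ := List.forall₂_iff_get.1 h
  exact Emb.couple hlen fun i => hget i i.isLt (hlen ▸ i.isLt)

theorem Emb.of_mem_children {e t u : Term S} (hu : u ∈ t.children) (h : Emb e u) : Emb e t := by
  rw [← node_root_children t]
  exact Emb.dive hu h

theorem Emb.refl : ∀ t : Term S, Emb t t
  | node _ ts => Emb.node_of_forall₂ (List.forall₂_same.2 fun t _ => Emb.refl t)

theorem Emb.trans {a b c : Term S} (hab : Emb a b) (hbc : Emb b c) : Emb a c := by
  induction hbc generalizing a with
  | dive hf _ ih => exact Emb.dive hf (ih hab)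
  | couple h _ ih =>
    cases hab with
    | dive hf hef =>
      obtain ⟨i, rfl⟩ := List.mem_iff_get.1 hf
      exact Emb.dive (List.get_mem _ _) (ih i hef)
    | couple h' hcomp' => exact Emb.couple (h'.trans h) fun i => ih (Fin.cast h' i) (hcomp' i)

instance : IsPreorder (Term S) Emb where
  refl := Emb.refl
  trans _ _ _ := Emb.trans

end Embedding

open Set Set.PartiallyWellOrderedOn

section WellQuasiOrder

variable {S : Type*} {ar : S → ℕ}

theorem WF.length_children {t : Term S} (h : WF ar t) : t.children.length = ar t.root := by
  cases h with
  | node hlen _ => exact hlen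

theorem WF.of_mem_children {t u : Term S} (h : WF ar t) (hu : u ∈ t.children) : WF ar u := by
  cases h with
  | node _ hts => exact hts u hu

theorem Emb.of_sublistForall₂_children {t u : Term S} (ht : WF ar t) (hu : WF ar u)
    (hroot : t.root = u.root) (h : List.SublistForall₂ Emb t.children u.children) : Emb t u := by
  obtain ⟨l, hl, hsub⟩ := List.sublistForall₂_iff.1 h
  have hlen : l.length = u.children.length := by
    rw [← hl.length_eq, ht.length_children, hu.length_children, hroot]
  rw [← node_root_children t, ← node_root_children u, hroot]
  exact Emb.node_of_forall₂ (hsub.eq_of_length hlen ▸ hl)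

theorem partiallyWellOrderedOn_children_of_isMinBadSeq {f : ℕ → Term S}
    (hf : IsBadSeq Emb {t | WF ar t} f) (hmin : ∀ n, IsMinBadSeq Emb sizeOf {t | WF ar t} n f) :
    {u | ∃ n, u ∈ (f n).children}.PartiallyWellOrderedOn Emb := by
  rw [iff_forall_not_isBadSeq]
  rintro g ⟨hg, hgbad⟩
  choose idx hidx using hg
  set k₀ := Function.argmin idx
  set n₀ := idx k₀
  let spliced : ℕ → Term S := fun j => if j < n₀ then f j else g (k₀ + (j - n₀))
  refine hmin n₀ spliced (fun m hm => (if_pos hm).symm) ?_ ⟨fun j => ?_, fun i j hij hemb => ?_⟩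
  · simpa [spliced] using sizeOf_lt_of_mem_children (hidx k₀)
  · by_cases hj : j < n₀
    · simpa [spliced, hj] using hf.1 j
    · simpa [spliced, hj] using (hf.1 _).of_mem_children (hidx _)
  · by_cases hj : j < n₀
    · simp only [spliced, hj, hij.trans hj, if_true] at hemb
      exact hf.2 i j hij hemb
    by_cases hi : i < n₀
    · simp only [spliced, hi, hj, if_true, if_false] at hemb
      have : n₀ ≤ idx (k₀ + (j - n₀)) := Function.argmin_le idx _
      exact hf.2 i _ (by omega) (hemb.of_mem_children (hidx _))
    · simp only [spliced, hi, hj, if_false] at hemb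
      exact hgbad _ _ (by omega) hemb

theorem partiallyWellOrderedOn_setOf_wf [Finite S] (ar : S → ℕ) :
    {t : Term S | WF ar t}.PartiallyWellOrderedOn Emb := by
  rw [iff_not_exists_isMinBadSeq sizeOf]
  rintro ⟨f, hf, hmin⟩
  have hchildren := partiallyWellOrderedOn_children_of_isMinBadSeq hf hmin
    |>.partiallyWellOrderedOn_sublistForall₂ Emb
  have hpairs := (finite_univ (α := S)).partiallyWellOrderedOn (r := Eq) |>.prod hchildren
  obtain ⟨m, n, hmn, hroot, hsub⟩ := partiallyWellOrderedOn_iff_exists_lt.1 hpairs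
    (fun n => ((f n).root, (f n).children)) fun n => ⟨mem_univ _, fun _ hu => ⟨n, hu⟩⟩
  exact hf.2 m n hmn (.of_sublistForall₂_children (hf.1 m) (hf.1 n) hroot hsub)

end WellQuasiOrder

/-- there is no infinite bad sequence of (arity-respecting) terms
over a finite signature, i.e. no infinite sequence avoiding `t i ⊴ t j` for all
`i < j`; equivalently every bad sequence is finite (has bounded length). -/
theorem no_infinite_bad_sequence {S : Type*} [Finite S] (ar : S → ℕ) :
    ¬ ∃ t : ℕ → Term S, (∀ n, WF ar (t n)) ∧ ∀ i j, i < j → ¬ Emb (t i) (t j) := by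
  rintro ⟨t, hwf, hbad⟩
  exact (iff_forall_not_isBadSeq Emb _).1 (partiallyWellOrderedOn_setOf_wf ar) t ⟨hwf, hbad⟩
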